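/- If 1 → F_g → E → G → 1 is an extension with F_g free of rank g ≥ 2 and G finite, then the induced homomorphism G → Out(F_g) is injective if and only if E has no nontrivial finite normal subgroup. -/

import Mathlib

open List FreeGroup

namespace Stmt13Aux
variable {α : Type*} [DecidableEq α]

/-- Non-cancelling relation on letters. -/
def R (a b : α × Bool) : Prop := ¬(a.1 = b.1 ∧ a.2 = !b.2)

lemma reduce_eq_self_of_chain' : ∀ {L : List (α × Bool)}, List.Chain' R L → reduce L = L
  | [], _ => rfl
  | [x], _ => rfl
  | x :: y :: t, h => by
    have hL : reduce (y :: t) = y :: t := reduce_eq_self_of_chain' h.tail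
    have hxy : R x y := (List.isChain_cons_cons.mp h).1
    rw [reduce.cons, hL]
    simp only [R] at hxy
    simp [hxy]

lemma chain'_reduce : ∀ (L : List (α × Bool)), List.Chain' R (reduce L)
  | [] => by simp [List.Chain']
  | x :: L => by
    have ih := chain'_reduce L
    rw [reduce.cons]
    cases hL : reduce L with
    | nil => simp [List.Chain']
    | cons y t =>
      rw [hL] at ih
      by_cases h : x.1 = y.1 ∧ x.2 = !y.2
      · simpa [h, List.Chain'] using ih.tail
      · simpa [h, List.Chain'] using List.isChain_cons_cons.mpr ⟨h, ih⟩

lemma reduce_cons_cons (p q : α × Bool) (t : List (α × Bool))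
    (h : reduce (q :: t) = q :: t) :
    reduce (p :: q :: t) = if p.1 = q.1 ∧ p.2 = !q.2 then t else p :: q :: t := by
  rw [reduce.cons, h]

lemma getLast_eq_of_concat {β : Type*} {l : List β} (h : l ≠ []) {M : List β} {b : β}
    (heq : l = M ++ [b]) : l.getLast h = b := by
  have h1 : l.getLast? = some b := by rw [heq]; exact List.getLast?_concat
  rw [List.getLast?_eq_getLast h] at h1
  exact Option.some_inj.mp h1

lemma chain'_flatten {L : List (α × Bool)} (h : List.Chain' R L) (hne : L ≠ [])
    (hcyc : R (L.getLast hne) (L.head hne)) (m : ℕ) :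
    List.Chain' R (List.flatten (List.replicate m L)) ∧
      (m ≠ 0 → (List.flatten (List.replicate m L)).head? = some (L.head hne)) := by
  induction m with
  | zero => simp [List.Chain']
  | succ m ih =>
    rw [List.replicate_succ, List.flatten_cons]
    constructor
    · refine List.IsChain.append h ih.1 ?_
      intro x hx y hy
      rw [List.getLast?_eq_getLast hne, Option.mem_def, Option.some_inj] at hx
      rcases Nat.eq_zero_or_pos m with hm | hm
      · subst hm; simp at hy
      · rw [ih.2 hm.ne', Option.mem_def, Option.some_inj] at hy
        subst hx; subst hy
        exact hcyc
    · intro _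
      rw [List.head?_append_of_ne_nil _ hne, List.head?_eq_head hne]

lemma conj_pow' {G : Type*} [Group G] (a x : G) (n : ℕ) :
    (a⁻¹ * x * a) ^ n = a⁻¹ * x ^ n * a := by
  induction n with
  | zero => simp
  | succ n ih => rw [pow_succ, pow_succ, ih]; group

lemma pow_ne_one_of_cyc {L : List (α × Bool)} (hred : reduce L = L) (hne : L ≠ [])
    (hcyc : R (L.getLast hne) (L.head hne)) (n : ℕ) :
    (FreeGroup.mk L) ^ (n + 1) ≠ 1 := by
  intro h
  have hch : List.Chain' R L := by rw [← hred]; exact chain'_reduce L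
  have h1 := (chain'_flatten hch hne hcyc (n + 1)).1
  have hx1 : (FreeGroup.mk L) ^ (n + 1)
      = FreeGroup.mk (List.flatten (List.replicate (n + 1) L)) := FreeGroup.pow_mk _
  have h2 : ((FreeGroup.mk L) ^ (n + 1)).toWord = List.flatten (List.replicate (n + 1) L) := by
    rw [hx1, FreeGroup.toWord_mk, reduce_eq_self_of_chain' h1]
  rw [h, FreeGroup.toWord_one] at h2
  rw [List.replicate_succ, List.flatten_cons] at h2
  exact hne (List.append_eq_nil_iff.mp h2.symm).1

lemma tf_aux : ∀ (k : ℕ) (x : FreeGroup α), x.norm ≤ k → ∀ n : ℕ, x ^ (n + 1) = 1 → x = 1 := by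
  intro k
  induction k with
  | zero =>
    intro x hx n _
    exact FreeGroup.norm_eq_zero.mp (Nat.le_antisymm hx (Nat.zero_le _))
  | succ k ih =>
    intro x hx n h
    obtain ⟨L, hLx, hred⟩ : ∃ L, x = FreeGroup.mk L ∧ reduce L = L :=
      ⟨x.toWord, (FreeGroup.mk_toWord).symm, FreeGroup.reduce_toWord x⟩
    have hword : x.toWord = L := by rw [hLx, FreeGroup.toWord_mk, hred]
    have hnx : x.norm = L.length := by
      rw [show x.norm = x.toWord.length from rfl, hword]
    cases L with
    | nil => rw [hLx]; rfl
    | cons hh tt =>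
      rcases tt.eq_nil_or_concat with rfl | ⟨M, lst, rfl⟩
      · -- L = [hh] : cyclically reduced
        exfalso
        refine pow_ne_one_of_cyc hred (by simp) ?_ n (by rw [← hLx]; exact h)
        show R hh hh
        simp [R]
      · simp only [List.concat_eq_append] at hLx hred hnx h ⊢
        by_cases hcyc : lst.1 = hh.1 ∧ lst.2 = !hh.2
        · -- first and last letters cancel
          have hlst : lst = (hh.1, !hh.2) := by
            obtain ⟨h1, h2⟩ := hcyc
            exact Prod.ext h1 h2
          have hxe : x = FreeGroup.mk [hh] * FreeGroup.mk M * FreeGroup.mk [lst] := by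
            rw [FreeGroup.mul_mk, FreeGroup.mul_mk, hLx]
            exact congrArg FreeGroup.mk (by simp)
          have hlst_inv : FreeGroup.mk [lst] = (FreeGroup.mk [hh])⁻¹ := by
            rw [FreeGroup.inv_mk, hlst,
              show FreeGroup.invRev [hh] = [(hh.1, !hh.2)] from rfl]
          set y := FreeGroup.mk M with hy
          have hxy : x = FreeGroup.mk [hh] * y * (FreeGroup.mk [hh])⁻¹ := by
            rw [hxe, hlst_inv]
          have hyn : y ^ (n + 1) = 1 := by
            have hyc : y = (FreeGroup.mk [hh])⁻¹ * x * FreeGroup.mk [hh] := by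
              rw [hxy]; group
            rw [hyc, conj_pow', h]
            group
          have hnorm : y.norm ≤ k := by
            have h1 : y.norm ≤ M.length := FreeGroup.norm_mk_le
            have h2 : (hh :: (M ++ [lst])).length = M.length + 2 := by simp
            omega
          have hy1 : y = 1 := ih y hnorm n hyn
          rw [hxy, hy1]
          group
        · -- cyclically reduced
          exfalso
          have hne : (hh :: (M ++ [lst])) ≠ [] := by simp
          refine pow_ne_one_of_cyc hred hne ?_ n (by rw [← hLx]; exact h)
          have hgl : (hh :: (M ++ [lst])).getLast hne = lst :=
            getLast_eq_of_concat hne (show hh :: (M ++ [lst]) = (hh :: M) ++ [lst] by simp)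
          have hhd : (hh :: (M ++ [lst])).head hne = hh := rfl
          rw [hgl, hhd]
          exact hcyc

theorem torsionfree (x : FreeGroup α) {n : ℕ} (hn : n ≠ 0) (h : x ^ n = 1) : x = 1 := by
  obtain ⟨m, rfl⟩ := Nat.exists_eq_succ_of_ne_zero hn
  exact tf_aux x.norm x le_rfl m h

lemma all_eq_of_append_singleton {β : Type*} :
    ∀ (l : List β) (a : β), l ++ [a] = a :: l → ∀ x ∈ l, x = a := by
  intro l a
  induction l with
  | nil => simp
  | cons b t ih =>
    intro h x hx
    rw [List.cons_append, List.cons.injEq] at h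
    obtain ⟨rfl, h2⟩ := h
    rcases List.mem_cons.mp hx with rfl | hx
    · rfl
    · exact ih h2 x hx

theorem center_eq_one {a b : α} (hab : a ≠ b) (x : FreeGroup α)
    (hx : ∀ y : FreeGroup α, x * y = y * x) : x = 1 := by
  by_contra hx1
  obtain ⟨L, hLx, hred⟩ : ∃ L, x = FreeGroup.mk L ∧ reduce L = L :=
    ⟨x.toWord, (FreeGroup.mk_toWord).symm, FreeGroup.reduce_toWord x⟩
  have hch : List.Chain' R L := by rw [← hred]; exact chain'_reduce L
  have hne : L ≠ [] := by
    rintro rfl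
    exact hx1 (by rw [hLx]; rfl)
  rcases L.eq_nil_or_concat with rfl | ⟨M, lst, hMl⟩
  · exact hne rfl
  simp only [List.concat_eq_append] at hMl
  subst hMl
  set d := if lst.1 = a then b else a with hd
  have hdne : d ≠ lst.1 := by
    rw [hd]
    split
    · rename_i hh; rw [hh]; exact hab.symm
    · rename_i hh; exact fun he => hh he.symm
  have hofd : FreeGroup.of d = FreeGroup.mk [(d, true)] := rfl
  have h1 : (x * FreeGroup.of d).toWord = (M ++ [lst]) ++ [(d, true)] := by
    rw [hofd, hLx, FreeGroup.mul_mk, FreeGroup.toWord_mk]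
    apply reduce_eq_self_of_chain'
    refine List.IsChain.append hch (by simp) ?_
    intro u hu v hv
    rw [List.getLast?_concat, Option.mem_def, Option.some_inj] at hu
    simp only [List.head?_cons, Option.mem_def, Option.some_inj] at hv
    subst hu; subst hv
    exact fun hc => hdne hc.1.symm
  obtain ⟨hh, tt, hLT⟩ : ∃ hh tt, M ++ [lst] = hh :: tt := by
    cases M with
    | nil => exact ⟨lst, [], rfl⟩
    | cons u v => exact ⟨u, v ++ [lst], rfl⟩
  have h3 : (x * FreeGroup.of d).toWord = reduce ((d, true) :: (hh :: tt)) := by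
    rw [hx (FreeGroup.of d), hofd, hLx, FreeGroup.mul_mk, FreeGroup.toWord_mk, hLT]
    rfl
  rw [hLT] at hred
  rw [reduce_cons_cons _ _ _ hred] at h3
  rw [h1, hLT] at h3
  by_cases hcan : (d, true).1 = hh.1 ∧ (d, true).2 = !hh.2
  · rw [if_pos hcan] at h3
    have := congrArg List.length h3
    simp at this
    omega
  · rw [if_neg hcan] at h3
    have hall := all_eq_of_append_singleton (hh :: tt) (d, true) h3
    have hmem : lst ∈ hh :: tt := by
      rw [← hLT]
      simp
    have hlst2 := hall lst hmem
    have : lst.1 = d := by rw [hlst2]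
    exact hdne this.symm

end Stmt13Aux

theorem stmt_13 {E : Type*} [Group E] (g : ℕ) (hg : 2 ≤ g) (N : Subgroup E) [N.Normal]
    (hfree : Nonempty (N ≃* FreeGroup (Fin g))) [Finite (E ⧸ N)] :
    (∀ e : E, (∃ n ∈ N, ∀ m ∈ N, e * m * e⁻¹ = n * m * n⁻¹) → e ∈ N) ↔
      (∀ K : Subgroup E, K.Normal → Finite K → K = ⊥) := by
  obtain ⟨φ⟩ := hfree
  -- N is torsion-free
  have hNtf : ∀ c ∈ N, ∀ n : ℕ, n ≠ 0 → c ^ n = 1 → c = 1 := by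
    intro c hc n hn hcn
    have h1 : (⟨c, hc⟩ : N) ^ n = 1 := by
      apply Subtype.ext
      push_cast
      simpa using hcn
    have h2 : φ ⟨c, hc⟩ ^ n = 1 := by rw [← _root_.map_pow, h1, _root_.map_one]
    have h3 : φ ⟨c, hc⟩ = 1 := Stmt13Aux.torsionfree _ hn h2
    have h4 : (⟨c, hc⟩ : N) = 1 := by
      apply φ.injective; rw [h3, _root_.map_one]
    simpa using congrArg Subtype.val h4
  -- N has trivial center
  have hNcen : ∀ c ∈ N, (∀ m ∈ N, c * m = m * c) → c = 1 := by
    intro c hc hcm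
    have hcen : ∀ y : FreeGroup (Fin g), φ ⟨c, hc⟩ * y = y * φ ⟨c, hc⟩ := by
      intro y
      obtain ⟨m, rfl⟩ := φ.surjective y
      rw [← _root_.map_mul, ← _root_.map_mul]
      congr 1
      apply Subtype.ext
      push_cast
      exact hcm m.1 m.2
    have hab : (⟨0, by omega⟩ : Fin g) ≠ ⟨1, by omega⟩ := by
      intro h
      simpa using congrArg Fin.val h
    have h3 : φ ⟨c, hc⟩ = 1 := Stmt13Aux.center_eq_one hab _ hcen
    have h4 : (⟨c, hc⟩ : N) = 1 := by
      apply φ.injective; rw [h3, _root_.map_one]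
    simpa using congrArg Subtype.val h4
  constructor
  · -- injectivity → no nontrivial finite normal subgroup
    intro hinj K hKn hKfin
    have hK1 : ∀ c, c ∈ K → c ∈ N → c = 1 := by
      intro c hcK hcN
      have hfin : IsOfFinOrder (⟨c, hcK⟩ : K) := isOfFinOrder_of_finite _
      obtain ⟨n, hn, hpow⟩ := hfin.exists_pow_eq_one
      have : c ^ n = 1 := by
        have := congrArg Subtype.val hpow
        simpa using this
      exact hNtf c hcN n hn.ne' this
    rw [eq_bot_iff]
    intro k hk
    rw [Subgroup.mem_bot]
    -- k commutes with all of N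
    have hcomm : ∀ m ∈ N, k * m * k⁻¹ = m := by
      intro m hm
      have hcN : k * m * k⁻¹ * m⁻¹ ∈ N :=
        N.mul_mem (‹N.Normal›.conj_mem m hm k) (N.inv_mem hm)
      have hcK : k * m * k⁻¹ * m⁻¹ ∈ K := by
        have h1 : m * k⁻¹ * m⁻¹ ∈ K := hKn.conj_mem k⁻¹ (K.inv_mem hk) m
        have h2 := K.mul_mem hk h1
        simpa [mul_assoc] using h2
      have := hK1 _ hcK hcN
      exact mul_inv_eq_one.mp this
    have hkN : k ∈ N := by
      apply hinj
      exact ⟨1, N.one_mem, fun m hm => by rw [hcomm m hm]; simp⟩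
    exact hK1 k hk hkN
  · -- no nontrivial finite normal subgroup → injectivity
    intro hfin e ⟨n, hnN, hcom⟩
    set C := Subgroup.centralizer (N : Set E) with hC
    have hCnormal : C.Normal := by
      constructor
      intro x hx gg
      rw [Subgroup.mem_centralizer_iff] at hx ⊢
      intro h hh
      have h1 : gg⁻¹ * h * gg ∈ (N : Set E) := ‹N.Normal›.conj_mem' h hh gg
      have h2 := hx _ h1
      have h3 := congrArg (fun z => gg * z * gg⁻¹) h2
      simp only [mul_assoc] at h3 ⊢
      simpa [mul_assoc] using h3
    have hCfin : Finite C := by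
      have hker : ∀ c : C, ((c : E) : E ⧸ N) = (1 : E ⧸ N) → c = 1 := by
        intro c hc
        have hcN : (c : E) ∈ N := by
          rwa [← QuotientGroup.eq_one_iff]
        have : (c : E) = 1 := hNcen _ hcN (fun m hm =>
          ((Subgroup.mem_centralizer_iff.mp c.2) m hm).symm)
        exact Subtype.ext this
      have hinje : Function.Injective (fun c : C => ((c : E) : E ⧸ N)) := by
        intro c1 c2 h12
        have h12' : ((c1 : E) : E ⧸ N) = ((c2 : E) : E ⧸ N) := h12
        have : ((((c1 : E)⁻¹ * c2 : E)) : E ⧸ N) = 1 := by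
          rw [QuotientGroup.mk_mul, QuotientGroup.mk_inv, ← h12']
          simp
        have h4 := hker ⟨(c1 : E)⁻¹ * c2, C.mul_mem (C.inv_mem c1.2) c2.2⟩ this
        have h5 := congrArg Subtype.val h4
        simp only at h5
        have : (c1 : E) = (c2 : E) := by
          rw [inv_mul_eq_one.mp h5]
        exact Subtype.ext this
      exact Finite.of_injective _ hinje
    have hCbot : C = ⊥ := hfin C hCnormal hCfin
    have hmem : n⁻¹ * e ∈ C := by
      rw [hC, Subgroup.mem_centralizer_iff]
      intro m hm
      have h0 := hcom m hm
      have h1 := congrArg (fun z => n⁻¹ * z * e) h0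
      simp only [mul_assoc, inv_mul_cancel, mul_one] at h1
      -- h1 : n⁻¹ * (e * m) = m * (n⁻¹ * e) (roughly)
      calc m * (n⁻¹ * e) = n⁻¹ * (n * (m * (n⁻¹ * e))) := by group
        _ = n⁻¹ * (e * m) := by
            rw [show n * (m * (n⁻¹ * e)) = n * m * n⁻¹ * e by group,
              ← h0]
            group
        _ = n⁻¹ * e * m := by group
    rw [hCbot, Subgroup.mem_bot] at hmem
    have : e = n := by
      have := congrArg (fun z => n * z) hmem
      simpa [← mul_assoc] using this
    rw [this]
    exact hnN
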